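/- arXiv:hep-th/0101079 — 2 statements merged into one kernel-verified Lean document; each statement's English description precedes it below -/
import Mathlib

section
/- With the star product defined by e^{φ(f)} *_ℏ e^{φ(g)} = e^{φ(f+g)} e^{ℏ B'(f,g)} for a bilinear form B', and a second bilinear form B'' whose antisymmetric part coincides with that of B' (i.e. B''(f,g) − B''(g,f) = B'(f,g) − B'(g,f) for all f, g), define T_ℏ(e^{φ(f)}) := e^{φ(f)} e^{(ℏ/2)(B''(f,f) − B'(f,f))}. Then T_ℏ intertwines the two star products: T_ℏ(e^{φ(f)}) *_ℏ^{B''} T_ℏ(e^{φ(g)}) = T_ℏ(e^{φ(f)} *_ℏ^{B'} e^{φ(g)}) for all f, g. -/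
/-- The twisted product on formal exponentials `e^{φ(f)}` (modeled as
`Finsupp.single f 1` in `V →₀ ℂ`), determined by
`e^{φ(f)} *_ℏ^B e^{φ(g)} = e^{φ(f+g)} · exp (ℏ B(f,g))`. -/
noncomputable def starE {V : Type*} [AddCommGroup V] [Module ℂ V]
    (B : V →ₗ[ℂ] V →ₗ[ℂ] ℂ) (ℏ : ℂ) (t s : V →₀ ℂ) : V →₀ ℂ :=
  t.sum fun f a => s.sum fun g b =>
    Finsupp.single (f + g) (a * b * Complex.exp (ℏ * B f g))

/-- The intertwiner `T_ℏ(e^{φ(f)}) = e^{φ(f)} · exp((ℏ/2)(B''(f,f) − B'(f,f)))`,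
extended linearly. -/
noncomputable def Tmap {V : Type*} [AddCommGroup V] [Module ℂ V]
    (B' B'' : V →ₗ[ℂ] V →ₗ[ℂ] ℂ) (ℏ : ℂ) (t : V →₀ ℂ) : V →₀ ℂ :=
  t.sum fun f a =>
    Finsupp.single f (a * Complex.exp ((ℏ / 2) * (B'' f f - B' f f)))

/-!
The difference `D = B'' - B'` of two bilinear forms with equal antisymmetric parts is
symmetric, so its quadratic form satisfies `D(f+g, f+g) = D(f,f) + D(g,g) + 2 D(f,g)`.
Hence the cocycle `exp (ℏ B''(f,g))` differs from `exp (ℏ B'(f,g))` exactly by the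
coboundary of `f ↦ exp ((ℏ/2) D(f,f))`, which is what `T_ℏ` multiplies by.
-/

section

variable {V : Type*} [AddCommGroup V] [Module ℂ V]

theorem starE_single_single (B : V →ₗ[ℂ] V →ₗ[ℂ] ℂ) (ℏ : ℂ) (f g : V) (a b : ℂ) :
    starE B ℏ (Finsupp.single f a) (Finsupp.single g b)
      = Finsupp.single (f + g) (a * b * Complex.exp (ℏ * B f g)) := by
  simp [starE, Finsupp.sum_single_index]

theorem Tmap_single (B' B'' : V →ₗ[ℂ] V →ₗ[ℂ] ℂ) (ℏ : ℂ) (f : V) (a : ℂ) :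
    Tmap B' B'' ℏ (Finsupp.single f a)
      = Finsupp.single f (a * Complex.exp ((ℏ / 2) * (B'' f f - B' f f))) := by
  simp [Tmap, Finsupp.sum_single_index]

theorem diag_sub_diag_add_of_antisymm_eq (B' B'' : V →ₗ[ℂ] V →ₗ[ℂ] ℂ) {f g : V}
    (h : B'' f g - B'' g f = B' f g - B' g f) :
    B'' (f + g) (f + g) - B' (f + g) (f + g)
      = (B'' f f - B' f f) + (B'' g g - B' g g) + 2 * (B'' f g - B' f g) := by
  simp only [map_add, LinearMap.add_apply]
  linear_combination -h

end

/-- if `B'` and `B''` have the same antisymmetric part, then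
`T_ℏ` intertwines the star products `*_ℏ^{B''}` and `*_ℏ^{B'}` on exponentials. -/
theorem Tmap_intertwines {V : Type*} [AddCommGroup V] [Module ℂ V]
    (B' B'' : V →ₗ[ℂ] V →ₗ[ℂ] ℂ)
    (hanti : ∀ f g : V, B'' f g - B'' g f = B' f g - B' g f)
    (ℏ : ℂ) (f g : V) :
    starE B'' ℏ (Tmap B' B'' ℏ (Finsupp.single f 1)) (Tmap B' B'' ℏ (Finsupp.single g 1))
      = Tmap B' B'' ℏ (starE B' ℏ (Finsupp.single f 1) (Finsupp.single g 1)) := by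
  rw [Tmap_single, Tmap_single, starE_single_single, starE_single_single, Tmap_single,
    diag_sub_diag_add_of_antisymm_eq B' B'' (hanti f g)]
  congr 1
  simp only [one_mul, ← Complex.exp_add]
  ring_nf
end

section
/- The k-times contracted tensor product makes W = ⊕_n W_n into an associative algebra: for the product defined by (t * s)_n = Σ_{n+2k = l+m} ℏ^k t_m ⊗_k s_l, where ⊗_k is the k-fold contraction with a fixed bilinear pairing, associativity holds: (t * s) * u = t * (s * u). Abstract combinatorial version: on the symmetric algebra S(V) over a vector space V equipped with a symmetric bilinear form β, the product defined on symmetric tensors by summing over all ways to contract k pairs between factors (with weight ℏ^k β-values and the multinomial coefficient m! l! / (k!(m−k)!(l−k)!)) is associative. -/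
/-!
Let `Δ = Σ β i j ∂ᵢ ∂ⱼ` on `S(V)` and let `Γ` be the contraction operator on `S(V) ⊗ S(V)`.
For symmetric `β` the Leibniz rule gives `Δ ∘ m = m ∘ (Δ ⊗ 1 + 1 ⊗ Δ + 2Γ)` for the
multiplication `m`, and the three summands commute, so
`exp(cΔ) (a b) = m (exp(2cΓ) (exp(cΔ) a ⊗ exp(cΔ) b))`.
With `2c = ℏ` this says that `exp(-cΔ)` carries the Wick product to the ordinary product,
`exp(-cΔ) (u * v) = exp(-cΔ) u · exp(-cΔ) v`, and associativity is inherited from `S(V)`.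
All exponentials are finite sums because `Δ` and `Γ` lower the total degree by two.
Below, `Δ` is `secondOrderOp β id id`, `Γ = contr R β` is `secondOrderOp β Sum.inl Sum.inr`,
and `exp (h D)` is `truncExp D h N` for `N` beyond the degrees involved.
-/

open MvPolynomial

/-- The contraction operator `Γ = Σ_{i,j} β(i,j) ∂_{left i} ∂_{right j}` acting on
`S(V) ⊗ S(V)`, modeled as `MvPolynomial (ι ⊕ ι) R` (left/right tensor factors). -/
noncomputable def contr {ι : Type*} [Fintype ι] [DecidableEq ι]
    (R : Type*) [CommRing R] (β : ι → ι → R) :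
    Module.End R (MvPolynomial (ι ⊕ ι) R) :=
  ∑ i : ι, ∑ j : ι,
    β i j • ((pderiv (Sum.inl i)).toLinearMap ∘ₗ (pderiv (Sum.inr j)).toLinearMap)

/-- The Wick (contraction) product on the symmetric algebra `S(V)`, modeled as
`MvPolynomial ι R` (`V` with basis `ι`, symmetric form `β`, deformation parameter `ℏ`):
`u * v = mul (exp (ℏ Γ) (u ⊗ v)) = Σ_k (ℏ^k/k!) mul (Γ^k (u ⊗ v))`, which on monomials
gives the sum over all ways to contract `k` pairs with weights `ℏ^k` and β-values,
with the multinomial coefficients of Wick's theorem. -/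
noncomputable def wick {ι : Type*} [Fintype ι] [DecidableEq ι]
    (R : Type*) [CommRing R] [Algebra ℚ R] (β : ι → ι → R) (ℏ : R)
    (u v : MvPolynomial ι R) : MvPolynomial ι R :=
  rename (Sum.elim id id) <|
    ∑ k ∈ Finset.range (u.totalDegree + v.totalDegree + 1),
      (k.factorial : ℚ)⁻¹ •
        (ℏ ^ k • ((contr R β ^ k) (rename Sum.inl u * rename Sum.inr v)))

open Finset

section TruncExp

variable {R M : Type*} [CommRing R] [AddCommGroup M] [Module R M] [Module ℚ M]

noncomputable def truncExp (D : Module.End R M) (h : R) (N : ℕ) (x : M) : M :=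
  ∑ k ∈ range N, (k.factorial : ℚ)⁻¹ • (h ^ k • (D ^ k) x)

variable {D F : Module.End R M} {h : R} {N : ℕ} {x : M}

theorem truncExp_eq_of_le {N' : ℕ} (hx : ∀ k, N ≤ k → (D ^ k) x = 0) (hN : N ≤ N') :
    truncExp D h N' x = truncExp D h N x := by
  refine (sum_subset (range_subset_range.mpr hN) fun k _ hk => ?_).symm
  rw [hx k (by simpa using hk), smul_zero, smul_zero]

theorem truncExp_smul (c : R) : truncExp (c • D) h N x = truncExp D (c * h) N x := by
  refine sum_congr rfl fun k _ => ?_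
  rw [smul_pow, LinearMap.smul_apply, mul_pow, mul_smul, smul_comm (h ^ k)]

theorem truncExp_zero (hN : 0 < N) : truncExp (0 : Module.End R M) h N x = x := by
  rw [truncExp, sum_eq_single_of_mem 0 (by simpa using hN) fun k _ hk => by simp [hk]]
  simp

theorem truncExp_add_of_commute (hDF : Commute D F)
    (hx : ∀ i j, N ≤ i + j → (D ^ i) ((F ^ j) x) = 0) :
    truncExp (D + F) h N x = truncExp D h N (truncExp F h N x) := by
  set t : ℕ → ℕ → M := fun i j =>
    ((i.factorial : ℚ)⁻¹ * (j.factorial : ℚ)⁻¹) • (h ^ (i + j) • (D ^ i) ((F ^ j) x))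
  have binomial : ∀ n, (n.factorial : ℚ)⁻¹ • (h ^ n • ((D + F) ^ n) x) =
      ∑ i ∈ range (n + 1), t i (n - i) := by
    intro n
    rw [hDF.add_pow, LinearMap.sum_apply, smul_sum, smul_sum]
    refine sum_congr rfl fun i hi => ?_
    have hin : i ≤ n := Nat.lt_succ_iff.mp (mem_range.mp hi)
    rw [Module.End.mul_apply, Module.End.mul_apply, Module.End.natCast_apply, map_nsmul,
      map_nsmul, ← Nat.cast_smul_eq_nsmul ℚ, smul_comm (h ^ _) ((_ : ℕ) : ℚ), smul_smul,
      Nat.cast_choose ℚ hin]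
    simp only [t, Nat.add_sub_cancel' hin]
    congr 1
    field_simp
  have hsplit : ∀ i j, (i.factorial : ℚ)⁻¹ • (h ^ i • (D ^ i)
      ((j.factorial : ℚ)⁻¹ • (h ^ j • (F ^ j) x))) = t i j := by
    intro i j
    rw [map_rat_smul, map_smul, smul_comm (h ^ i), smul_smul, smul_smul]
    simp only [t, pow_add]
  calc truncExp (D + F) h N x
      = ∑ i ∈ range N, ∑ j ∈ range (N - i), t i j := by
        rw [← sum_range_diag_flip]
        exact sum_congr rfl fun n _ => binomial n
    _ = ∑ i ∈ range N, ∑ j ∈ range N, t i j := by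
      refine sum_congr rfl fun i _ => sum_subset (range_subset_range.mpr (Nat.sub_le N i))
        fun j _ hj => ?_
      rw [mem_range, not_lt, Nat.sub_le_iff_le_add'] at hj
      simp only [t, hx i j (by omega), smul_zero]
    _ = truncExp D h N (truncExp F h N x) := by
      simp only [truncExp, map_sum, smul_sum, hsplit]

theorem truncExp_truncExp_neg (hx : ∀ k, N ≤ k → (D ^ k) x = 0) :
    truncExp D h N (truncExp D (-h) N x) = x := by
  rcases N.eq_zero_or_pos with rfl | hN
  · simpa [truncExp] using (hx 0 le_rfl).symm
  have hneg : truncExp D (-h) N x = truncExp ((-1 : R) • D) h N x := by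
    rw [truncExp_smul, neg_one_mul]
  have hvanish : ∀ i j, N ≤ i + j → (D ^ i) ((((-1 : R) • D) ^ j) x) = 0 := by
    intro i j hij
    rw [smul_pow, LinearMap.smul_apply, map_smul, ← Module.End.mul_apply, ← pow_add,
      hx _ hij, smul_zero]
  rw [hneg, ← truncExp_add_of_commute ((Commute.refl D).smul_right _) hvanish, neg_one_smul,
    add_neg_cancel, truncExp_zero hN]

theorem truncExp_map {M' : Type*} [AddCommGroup M'] [Module R M'] [Module ℚ M']
    {D' : Module.End R M'} {G : Type*} [FunLike G M' M] [LinearMapClass G R M' M] (f : G)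
    (hf : ∀ y, D (f y) = f (D' y)) (y : M') :
    truncExp D h N (f y) = f (truncExp D' h N y) := by
  have hpow : ∀ k y, (D ^ k) (f y) = f ((D' ^ k) y) := by
    intro k
    induction k with
    | zero => simp
    | succ k ih => simp [pow_succ, ih, hf]
  simp only [truncExp, map_sum, hpow, map_rat_smul, map_smul]

theorem truncExp_mul_right {A : Type*} [Ring A] [Algebra R A] [Module ℚ A]
    {D : Module.End R A} {y : A} (hD : ∀ z, D (z * y) = D z * y) (z : A) :
    truncExp D h N (z * y) = truncExp D h N z * y := by
  have hpow : ∀ k z, (D ^ k) (z * y) = (D ^ k) z * y := by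
    intro k
    induction k with
    | zero => simp
    | succ k ih => simp [pow_succ, ih, hD]
  simp only [truncExp, sum_mul, hpow, smul_mul_assoc]

end TruncExp

namespace MvPolynomial

variable {σ R : Type*} [CommRing R]

theorem pderiv_pderiv_comm (i j : σ) (p : MvPolynomial σ R) :
    pderiv i (pderiv j p) = pderiv j (pderiv i p) := by
  classical
  ext m
  simp only [coeff_pderiv, Finsupp.add_apply, Finsupp.single_apply, add_right_comm m]
  by_cases hij : i = j
  · subst hij; rfl
  · simp only [if_neg hij, if_neg (Ne.symm hij), add_zero]
    ring

theorem totalDegree_pderiv_add_one_le {i : σ} {p : MvPolynomial σ R}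
    (hp : pderiv i p ≠ 0) : (pderiv i p).totalDegree + 1 ≤ p.totalDegree := by
  obtain ⟨m, hm, hmax⟩ := exists_mem_eq_sup _ (support_nonempty.mpr hp)
    fun s : σ →₀ ℕ => s.sum fun _ e => e
  rw [mem_support_iff, coeff_pderiv] at hm
  have := le_totalDegree (mem_support_iff.mpr (left_ne_zero_of_mul hm))
  rw [Finsupp.sum_add_index' (fun _ => rfl) (fun _ _ _ => rfl),
    Finsupp.sum_single_index rfl] at this
  rwa [totalDegree, hmax]

theorem pderiv_rename_eq_zero {τ : Type*} {e : τ → σ} {t : σ} (ht : t ∉ Set.range e)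
    (p : MvPolynomial τ R) : pderiv t (rename e p) = 0 := by
  classical
  refine pderiv_eq_zero_of_notMem_vars fun hv => ?_
  obtain ⟨s, _, rfl⟩ := mem_image.mp (vars_rename e p hv)
  exact ht ⟨s, rfl⟩

theorem pderiv_rename_sumElim (i : σ) (p : MvPolynomial (σ ⊕ σ) R) :
    pderiv i (rename (Sum.elim id id) p) =
      rename (Sum.elim id id) (pderiv (Sum.inl i) p + pderiv (Sum.inr i) p) := by
  induction p using MvPolynomial.induction_on with
  | C a => simp
  | add p q hp hq => simp only [map_add, hp, hq]; ring
  | mul_X p s ih =>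
    classical
    rcases s with a | a <;>
    · simp only [map_mul, rename_X, Sum.elim_inl, Sum.elim_inr, id_eq, Derivation.leibniz, ih,
        pderiv_X, map_add, smul_eq_mul, Pi.single_apply, Sum.inl.injEq, Sum.inr.injEq,
        reduceCtorEq, if_false]
      split_ifs <;> simp only [map_one, map_zero] <;> ring

theorem totalDegree_rename_mul_rename_le {τ τ' : Type*} (f : τ → σ) (g : τ' → σ)
    (u : MvPolynomial τ R) (v : MvPolynomial τ' R) :
    (rename f u * rename g v).totalDegree ≤ u.totalDegree + v.totalDegree :=
  (totalDegree_mul _ _).trans (add_le_add (totalDegree_rename_le f u) (totalDegree_rename_le g v))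

def LowersDegreeBy (n : ℕ) (D : Module.End R (MvPolynomial σ R)) : Prop :=
  ∀ p, D p ≠ 0 → (D p).totalDegree + n ≤ p.totalDegree

theorem lowersDegreeBy_pderiv (i : σ) :
    LowersDegreeBy 1 (pderiv (R := R) i).toLinearMap :=
  fun _ hp => totalDegree_pderiv_add_one_le hp

namespace LowersDegreeBy

variable {m n : ℕ} {D E : Module.End R (MvPolynomial σ R)}

theorem apply_eq_zero (hD : LowersDegreeBy n D) {p : MvPolynomial σ R}
    (hp : p.totalDegree < n) : D p = 0 := by
  by_contra h
  have := hD p h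
  omega

theorem mul (hD : LowersDegreeBy m D) (hE : LowersDegreeBy n E) :
    LowersDegreeBy (m + n) (D * E) := by
  intro p hp
  have hEp : E p ≠ 0 := fun h => hp (by rw [Module.End.mul_apply, h, map_zero])
  have := hD _ hp
  have := hE _ hEp
  rw [Module.End.mul_apply] at *
  omega

theorem pow (hD : LowersDegreeBy n D) (k : ℕ) : LowersDegreeBy (k * n) (D ^ k) := by
  induction k with
  | zero => intro p hp; simp
  | succ k ih => rw [pow_succ, add_mul, one_mul]; exact ih.mul hD

theorem pow_apply_eq_zero (hD : LowersDegreeBy n D) {k : ℕ} {p : MvPolynomial σ R}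
    (hp : p.totalDegree < k * n) : (D ^ k) p = 0 :=
  (hD.pow k).apply_eq_zero hp

theorem pow_apply_pow_apply_eq_zero (hD : LowersDegreeBy n D) (hE : LowersDegreeBy n E)
    {i j : ℕ} {p : MvPolynomial σ R} (hp : p.totalDegree < (i + j) * n) :
    (D ^ i) ((E ^ j) p) = 0 := by
  rw [← Module.End.mul_apply]
  exact ((hD.pow i).mul (hE.pow j)).apply_eq_zero (by rwa [← add_mul])

theorem zero : LowersDegreeBy n (0 : Module.End R (MvPolynomial σ R)) :=
  fun _ hp => absurd rfl hp

theorem add (hD : LowersDegreeBy n D) (hE : LowersDegreeBy n E) : LowersDegreeBy n (D + E) := by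
  intro p hp
  rw [LinearMap.add_apply] at *
  by_cases hDp : D p = 0
  · rw [hDp, zero_add] at hp ⊢; exact hE p hp
  by_cases hEp : E p = 0
  · rw [hEp, add_zero] at hp ⊢; exact hD p hp
  have := totalDegree_add (D p) (E p)
  have := hD p hDp
  have := hE p hEp
  omega

theorem smul (hD : LowersDegreeBy n D) (c : R) : LowersDegreeBy n (c • D) := by
  intro p hp
  have hDp : D p ≠ 0 := fun h => hp (by rw [LinearMap.smul_apply, h, smul_zero])
  exact (Nat.add_le_add_right (totalDegree_smul_le c (D p)) n).trans (hD p hDp)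

theorem sum {α : Type*} {s : Finset α} {D : α → Module.End R (MvPolynomial σ R)}
    (hD : ∀ a ∈ s, LowersDegreeBy n (D a)) : LowersDegreeBy n (∑ a ∈ s, D a) := by
  classical
  induction s using Finset.induction_on with
  | empty => exact zero
  | insert a s ha ih =>
    rw [sum_insert ha]
    exact (hD a (mem_insert_self a s)).add (ih fun b hb => hD b (mem_insert_of_mem hb))

theorem totalDegree_truncExp_le [Algebra ℚ R] (hD : LowersDegreeBy n D) (h : R) (N : ℕ)
    (p : MvPolynomial σ R) : (truncExp D h N p).totalDegree ≤ p.totalDegree := by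
  refine totalDegree_finsetSum_le fun k _ => ?_
  refine (totalDegree_smul_le _ _).trans ((totalDegree_smul_le _ _).trans ?_)
  by_cases hk : (D ^ k) p = 0
  · simp [hk]
  · exact le_of_add_le_left (hD.pow k p hk)

end LowersDegreeBy

section SecondOrderOp

variable {ι τ : Type*} [Fintype ι]

noncomputable def secondOrderOp (c : ι → ι → R) (f g : ι → τ) :
    Module.End R (MvPolynomial τ R) :=
  ∑ i, ∑ j, c i j • ((pderiv (f i)).toLinearMap ∘ₗ (pderiv (g j)).toLinearMap)

variable (c : ι → ι → R) (f g : ι → τ)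

theorem secondOrderOp_apply (p : MvPolynomial τ R) :
    secondOrderOp c f g p = ∑ i, ∑ j, c i j • pderiv (f i) (pderiv (g j) p) := by
  simp [secondOrderOp, LinearMap.sum_apply]

theorem lowersDegreeBy_secondOrderOp : LowersDegreeBy 2 (secondOrderOp c f g) :=
  LowersDegreeBy.sum fun i _ => LowersDegreeBy.sum fun j _ =>
    ((lowersDegreeBy_pderiv (f i)).mul (lowersDegreeBy_pderiv (g j))).smul (c i j)

theorem commute_secondOrderOp (c' : ι → ι → R) (f' g' : ι → τ) :
    Commute (secondOrderOp c f g) (secondOrderOp c' f' g') := by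
  have hcomm : ∀ a b : τ, Commute (pderiv (R := R) a).toLinearMap (pderiv b).toLinearMap :=
    fun a b => LinearMap.ext (pderiv_pderiv_comm a b)
  refine .sum_left _ _ _ fun i _ => .sum_left _ _ _ fun j _ =>
    .sum_right _ _ _ fun i' _ => .sum_right _ _ _ fun j' _ => ?_
  refine ((Commute.mul_left ?_ ?_).smul_left _).smul_right _ <;>
    exact (hcomm _ _).mul_right (hcomm _ _)

theorem secondOrderOp_swap : secondOrderOp c g f = secondOrderOp (fun i j => c j i) f g := by
  rw [secondOrderOp, sum_comm]
  refine sum_congr rfl fun i _ => sum_congr rfl fun j _ => ?_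
  congr 1
  exact LinearMap.ext (pderiv_pderiv_comm (g j) (f i))

theorem secondOrderOp_mul_right {x y : MvPolynomial τ R} (hf : ∀ i, pderiv (f i) y = 0)
    (hg : ∀ j, pderiv (g j) y = 0) :
    secondOrderOp c f g (x * y) = secondOrderOp c f g x * y := by
  simp only [secondOrderOp_apply, sum_mul, smul_mul_assoc, pderiv_mul, hf, hg,
    mul_zero, add_zero]

theorem secondOrderOp_rename {κ : Type*} {e : τ → κ} (he : Function.Injective e)
    (p : MvPolynomial τ R) :
    secondOrderOp c (e ∘ f) (e ∘ g) (rename e p) = rename e (secondOrderOp c f g p) := by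
  simp only [secondOrderOp_apply, Function.comp_apply, pderiv_rename he, map_sum, map_smul]

theorem secondOrderOp_rename_sumElim (q : MvPolynomial (τ ⊕ τ) R) :
    secondOrderOp c f g (rename (Sum.elim id id) q) =
      rename (Sum.elim id id)
        ((secondOrderOp c (Sum.inl ∘ f) (Sum.inr ∘ g) +
            secondOrderOp c (Sum.inr ∘ f) (Sum.inl ∘ g) +
          (secondOrderOp c (Sum.inl ∘ f) (Sum.inl ∘ g) +
            secondOrderOp c (Sum.inr ∘ f) (Sum.inr ∘ g)) :
          Module.End R (MvPolynomial (τ ⊕ τ) R)) q) := by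
  simp only [LinearMap.add_apply, secondOrderOp_apply, Function.comp_apply,
    pderiv_rename_sumElim, map_add, map_sum, map_smul, smul_add, sum_add_distrib]
  abel

theorem truncExp_secondOrderOp_rename_mul [Algebra ℚ R] {e : ι → τ}
    (he : Function.Injective e) {y : MvPolynomial τ R} (hy : ∀ i, pderiv (e i) y = 0)
    (h : R) (N : ℕ) (p : MvPolynomial ι R) :
    truncExp (secondOrderOp c e e) h N (rename e p * y) =
      rename e (truncExp (secondOrderOp c id id) h N p) * y := by
  rw [truncExp_mul_right (fun z => secondOrderOp_mul_right c e e hy hy)]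
  congr 1
  exact truncExp_map (rename e) (secondOrderOp_rename c id id he) p

end SecondOrderOp

end MvPolynomial

section Wick

variable {ι R : Type*} [Fintype ι] [DecidableEq ι] [CommRing R] (β : ι → ι → R)

theorem secondOrderOp_inl_inr_add_inr_inl (hβ : ∀ i j, β i j = β j i) :
    secondOrderOp β Sum.inl Sum.inr + secondOrderOp β Sum.inr Sum.inl = (2 : R) • contr R β := by
  rw [secondOrderOp_swap β Sum.inl Sum.inr,
    show (fun i j => β j i) = β from funext₂ fun i j => (hβ i j).symm, two_smul]
  rfl

variable [Algebra ℚ R]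

theorem truncExp_secondOrderOp_mul (hβ : ∀ i j, β i j = β j i) (c : R) {N : ℕ}
    {a b : MvPolynomial ι R} (hN : a.totalDegree + b.totalDegree < N) :
    truncExp (secondOrderOp β id id) c N (a * b) =
      rename (Sum.elim id id) (truncExp (contr R β) (2 * c) N
        (rename Sum.inl (truncExp (secondOrderOp β id id) c N a) *
          rename Sum.inr (truncExp (secondOrderOp β id id) c N b))) := by
  set q : MvPolynomial (ι ⊕ ι) R := rename Sum.inl a * rename Sum.inr b
  have hq : q.totalDegree < N :=
    (totalDegree_rename_mul_rename_le (Sum.inl : ι → ι ⊕ ι) Sum.inr a b).trans_lt hN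
  have hvanish : ∀ {D F : Module.End R (MvPolynomial (ι ⊕ ι) R)}, LowersDegreeBy 2 D →
      LowersDegreeBy 2 F → ∀ i j, N ≤ i + j → (D ^ i) ((F ^ j) q) = 0 :=
    fun hD hF i j hij => hD.pow_apply_pow_apply_eq_zero hF (by omega)
  have hab : a * b = rename (Sum.elim id id) q := by
    simp [q, rename_rename, rename_id]
  have hL := lowersDegreeBy_secondOrderOp β (Sum.inl : ι → ι ⊕ ι) Sum.inl
  have hR := lowersDegreeBy_secondOrderOp β (Sum.inr : ι → ι ⊕ ι) Sum.inr
  have hC := (lowersDegreeBy_secondOrderOp β (Sum.inl : ι → ι ⊕ ι) Sum.inr).add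
    (lowersDegreeBy_secondOrderOp β (Sum.inr : ι → ι ⊕ ι) Sum.inl)
  rw [hab, truncExp_map _ (secondOrderOp_rename_sumElim β id id) q]
  simp only [Function.comp_id]
  rw [truncExp_add_of_commute
      (((commute_secondOrderOp ..).add_right (commute_secondOrderOp ..)).add_left
        ((commute_secondOrderOp ..).add_right (commute_secondOrderOp ..)))
      (hvanish hC (hL.add hR)),
    truncExp_add_of_commute (commute_secondOrderOp ..) (hvanish hL hR),
    secondOrderOp_inl_inr_add_inr_inl β hβ, truncExp_smul]
  congr 2
  rw [show q = rename Sum.inr b * rename Sum.inl a from mul_comm _ _,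
    truncExp_secondOrderOp_rename_mul β Sum.inr_injective
      (fun i => pderiv_rename_eq_zero (by simp) a), mul_comm (rename Sum.inr _),
    truncExp_secondOrderOp_rename_mul β Sum.inl_injective
      (fun i => pderiv_rename_eq_zero (by simp) _)]

theorem wick_eq_truncExp (ℏ : R) {N : ℕ} {u v : MvPolynomial ι R}
    (hN : u.totalDegree + v.totalDegree < N) :
    wick R β ℏ u v = rename (Sum.elim id id)
      (truncExp (contr R β) ℏ N (rename Sum.inl u * rename Sum.inr v)) := by
  have hq := totalDegree_rename_mul_rename_le (Sum.inl : ι → ι ⊕ ι) Sum.inr u v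
  change rename (Sum.elim id id) (truncExp (contr R β) ℏ (u.totalDegree + v.totalDegree + 1)
    (rename Sum.inl u * rename Sum.inr v)) = _
  rw [← truncExp_eq_of_le (fun k hk => ?_) (by omega : u.totalDegree + v.totalDegree + 1 ≤ N)]
  exact (lowersDegreeBy_secondOrderOp β _ _).pow_apply_eq_zero (by omega)

theorem totalDegree_wick_le (ℏ : R) (u v : MvPolynomial ι R) :
    (wick R β ℏ u v).totalDegree ≤ u.totalDegree + v.totalDegree :=
  (totalDegree_rename_le _ _).trans <|
    ((lowersDegreeBy_secondOrderOp β _ _).totalDegree_truncExp_le _ _ _).trans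
      (totalDegree_rename_mul_rename_le (Sum.inl : ι → ι ⊕ ι) Sum.inr u v)

variable {β}

theorem wick_eq_truncExp_mul_truncExp (hβ : ∀ i j, β i j = β j i) {c ℏ : R} (hc : 2 * c = ℏ)
    {N : ℕ} {u v : MvPolynomial ι R} (hN : u.totalDegree + v.totalDegree < N) :
    wick R β ℏ u v = truncExp (secondOrderOp β id id) c N
      (truncExp (secondOrderOp β id id) (-c) N u *
        truncExp (secondOrderOp β id id) (-c) N v) := by
  have hΔ := lowersDegreeBy_secondOrderOp β (id : ι → ι) id
  rw [truncExp_secondOrderOp_mul β hβ c ((add_le_add (hΔ.totalDegree_truncExp_le _ _ u)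
      (hΔ.totalDegree_truncExp_le _ _ v)).trans_lt hN),
    truncExp_truncExp_neg fun k hk => hΔ.pow_apply_eq_zero (by omega),
    truncExp_truncExp_neg fun k hk => hΔ.pow_apply_eq_zero (by omega), hc,
    wick_eq_truncExp β ℏ hN]

theorem truncExp_neg_wick (hβ : ∀ i j, β i j = β j i) {c ℏ : R} (hc : 2 * c = ℏ)
    {N : ℕ} {u v : MvPolynomial ι R} (hN : u.totalDegree + v.totalDegree < N) :
    truncExp (secondOrderOp β id id) (-c) N (wick R β ℏ u v) =
      truncExp (secondOrderOp β id id) (-c) N u *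
        truncExp (secondOrderOp β id id) (-c) N v := by
  have hΔ := lowersDegreeBy_secondOrderOp β (id : ι → ι) id
  have hdeg := add_le_add (hΔ.totalDegree_truncExp_le (-c) N u)
    (hΔ.totalDegree_truncExp_le (-c) N v)
  have := totalDegree_mul (truncExp (secondOrderOp β id id) (-c) N u)
    (truncExp (secondOrderOp β id id) (-c) N v)
  rw [wick_eq_truncExp_mul_truncExp hβ hc hN, ← neg_neg c, neg_neg (-c),
    truncExp_truncExp_neg fun k hk => hΔ.pow_apply_eq_zero (by omega)]

end Wick

/-- the Wick/contraction product on the symmetric algebra `S(V)`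
(with symmetric bilinear form `β` and parameter `ℏ`) is associative. -/
theorem wick_assoc {ι : Type*} [Fintype ι] [DecidableEq ι]
    (R : Type*) [CommRing R] [Algebra ℚ R] (β : ι → ι → R)
    (hβ : ∀ i j, β i j = β j i) (ℏ : R) (u v w : MvPolynomial ι R) :
    wick R β ℏ (wick R β ℏ u v) w = wick R β ℏ u (wick R β ℏ v w) := by
  obtain ⟨c, hc⟩ : ∃ c : R, 2 * c = ℏ :=
    ⟨algebraMap ℚ R 2⁻¹ * ℏ, by rw [← mul_assoc, ← map_ofNat (algebraMap ℚ R) 2, ← map_mul]; simp⟩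
  set N := u.totalDegree + v.totalDegree + w.totalDegree + 1
  set E := truncExp (secondOrderOp β (id : ι → ι) id) c N
  set T := truncExp (secondOrderOp β (id : ι → ι) id) (-c) N
  have hwick : ∀ {a b}, a.totalDegree + b.totalDegree < N → wick R β ℏ a b = E (T a * T b) :=
    wick_eq_truncExp_mul_truncExp hβ hc
  have hT : ∀ {a b}, a.totalDegree + b.totalDegree < N → T (wick R β ℏ a b) = T a * T b :=
    truncExp_neg_wick hβ hc
  have huv := totalDegree_wick_le β ℏ u v
  have hvw := totalDegree_wick_le β ℏ v w
  calc wick R β ℏ (wick R β ℏ u v) w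
      = E (T (wick R β ℏ u v) * T w) := hwick (by omega)
    _ = E (T u * (T v * T w)) := by rw [hT (by omega), mul_assoc]
    _ = E (T u * T (wick R β ℏ v w)) := by rw [hT (by omega)]
    _ = wick R β ℏ u (wick R β ℏ v w) := (hwick (by omega)).symm
end
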